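/- arXiv:2603.02674 — 3 statements merged into one kernel-verified Lean document; each statement's English description precedes it below -/
import Mathlib

section
/- Under the standing hypotheses, let i ∈ P satisfy M_i ≠ 0 and set S = ⋃_{0 ≠ x ∈ M_i} S_x^M = {ℓ ≤ i : there exists 0 ≠ x ∈ M_i and y ∈ M_ℓ with t^{i−ℓ}y = x}. Then S has a minimal element, i.e. there is μ ∈ S such that no s ∈ S satisfies s < μ. -/
open scoped DirectSum

variable (P : Type) [AddCommGroup P] [Lattice P]
  [CovariantClass P P (· + ·) (· ≤ ·)] [DecidableEq P]
variable (R : Type) [CommRing R]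

/-- The monoid algebra `R[U₀]` on the submonoid `U₀` of nonnegative elements of `P`. -/
abbrev PersAlg : Type := AddMonoidAlgebra R ↥(AddSubmonoid.nonneg P)

/-- The monomial `t^p ∈ R[U₀]` for `p ≥ 0` (and `0` otherwise, a junk value). -/
noncomputable def tp (p : P) : PersAlg P R :=
  letI := Classical.dec (0 ≤ p)
  if h : 0 ≤ p then AddMonoidAlgebra.single (⟨p, h⟩ : ↥(AddSubmonoid.nonneg P)) 1 else 0

/-- A `P`-graded `R[U₀]`-module (persistence module): an `R[U₀]`-module together with an
internal direct sum decomposition `M = ⊕_{a ∈ P} M_a` into `R`-submodules such that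
`t^s • M_a ⊆ M_{a+s}` for all `s ≥ 0`. -/
structure PersMod : Type 1 where
  carrier : Type
  [isAddCommGroup : AddCommGroup carrier]
  [isModuleR : Module R carrier]
  [isModule : Module (PersAlg P R) carrier]
  [isTower : IsScalarTower R (PersAlg P R) carrier]
  deg : P → Submodule R carrier
  isInternal : DirectSum.IsInternal deg
  tp_smul_mem : ∀ (s : P), 0 ≤ s → ∀ (a : P) (x : carrier),
    x ∈ deg a → tp P R s • x ∈ deg (a + s)

attribute [instance] PersMod.isAddCommGroup PersMod.isModuleR PersMod.isModule PersMod.isTower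

/-- Scalar multiplication by a fixed element of `R[U₀]`, as an `R`-linear map. -/
noncomputable def smulMapR (M : PersMod P R) (a : PersAlg P R) : M.carrier →ₗ[R] M.carrier :=
  (LinearMap.lsmul (PersAlg P R) M.carrier a).restrictScalars R

/-- `D_r ⊆ M_r`, the sum of the images of all `M_q`, `q < r`, under `t^{r-q}`. -/
noncomputable def Dsub (M : PersMod P R) (r : P) : Submodule R M.carrier :=
  ⨆ q : {q : P // q < r}, Submodule.map (smulMapR P R M (tp P R (r - q.1))) (M.deg q.1)

/-- `M` is graded free: it admits an `R[U₀]`-basis of homogeneous elements. -/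
def IsGradedFree (M : PersMod P R) : Prop :=
  ∃ (Λ : Type) (d : Λ → P) (b : Module.Basis Λ (PersAlg P R) M.carrier),
    ∀ η, b η ∈ M.deg (d η)

/-- `M` is graded projective: it is a graded direct summand of a graded free module. -/
def IsGradedProjective (M : PersMod P R) : Prop :=
  ∃ F : PersMod P R, IsGradedFree P R F ∧
    ∃ (ι : M.carrier →ₗ[PersAlg P R] F.carrier) (π : F.carrier →ₗ[PersAlg P R] M.carrier),
      (∀ (a : P), ∀ x ∈ M.deg a, ι x ∈ F.deg a) ∧
      (∀ (a : P), ∀ x ∈ F.deg a, π x ∈ M.deg a) ∧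
      π.comp ι = LinearMap.id

/-- An `R[U₀]`-submodule `S` of a graded module `F` is graded if it is the sum of its
homogeneous parts `S ∩ F_a`. -/
def IsGradedSubmodule (F : PersMod P R) (S : Submodule (PersAlg P R) F.carrier) : Prop :=
  S.restrictScalars R = ⨆ a : P, (S.restrictScalars R ⊓ F.deg a)

/-- For a graded submodule `S ⊆ F`, the submodule `D_r` of sums of images of the homogeneous
pieces `S ∩ F_q`, `q < r`, under `t^{r-q}`. -/
noncomputable def DsubOf (F : PersMod P R) (S : Submodule (PersAlg P R) F.carrier) (r : P) :
    Submodule R F.carrier :=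
  ⨆ q : {q : P // q < r},
    Submodule.map (smulMapR P R F (tp P R (r - q.1))) (S.restrictScalars R ⊓ F.deg q.1)

/-!
Realise `M` as a graded retract of a graded free module `F` with homogeneous basis `b` of
degrees `d`. The coordinates of a homogeneous `x ∈ F_i` are monomials `c • t^{i - d η}`: the
`R`-spans of the monomials `t^u • b η` of degree `d η + u = a` lie in `F_a` and together span
`F`, so by independence of the `F_a` they are the `F_a`. Hence `x` is divisible by `t^{i-ℓ}` from
degree `ℓ` exactly when `d η ≤ ℓ` on its support, and through the retraction the same holds in
`M`: the birth set of `x ∈ M_i` is the interval from `sup d` over the support of `ι x` up to `i`.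
As `M_i` is finitely generated, only finitely many supports, hence finitely many lower ends,
occur, and a minimal one among them is a minimal element of the union.
-/

lemma Set.Finite.exists_minimal_of_coinitial {α : Type*} [Preorder α] {S T : Set α}
    (hT : T.Finite) (hTne : T.Nonempty) (hTS : T ⊆ S) (hcov : ∀ s ∈ S, ∃ t ∈ T, t ≤ s) :
    ∃ μ ∈ S, ∀ s ∈ S, ¬ s < μ := by
  obtain ⟨μ, hμT, hμmin⟩ := hT.exists_minimal hTne
  refine ⟨μ, hTS hμT, fun s hs hsμ => ?_⟩
  obtain ⟨t, htT, hts⟩ := hcov s hs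
  exact (hts.trans_lt hsμ).not_ge (hμmin htT (hts.trans hsμ.le))

lemma Finset.finite_setOf_sup'_of_subset {Λ α : Type*} [SemilatticeSup α] (Ξ : Finset Λ)
    (d : Λ → α) : {μ | ∃ s ⊆ Ξ, ∃ h : s.Nonempty, s.sup' h d = μ}.Finite := by
  refine (Ξ.powerset.finite_toSet.biUnion (t := fun s => {μ | ∃ h : s.Nonempty, s.sup' h d = μ})
    fun s _ => Set.Subsingleton.finite ?_).subset ?_
  · rintro _ ⟨h, rfl⟩ _ ⟨h', rfl⟩
    rfl
  · rintro _ ⟨s, hs, h, rfl⟩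
    exact Set.mem_biUnion (Finset.mem_powerset.mpr hs) ⟨h, rfl⟩

lemma Submodule.FG.exists_support_subset {R M Λ N : Type*} [Semiring R] [AddCommMonoid M]
    [Module R M] [AddCommMonoid N] [Module R N] {S : Submodule R M} (hS : S.FG)
    (ψ : M →ₗ[R] Λ →₀ N) : ∃ Ξ : Finset Λ, ∀ x ∈ S, (ψ x).support ⊆ Ξ := by
  classical
  obtain ⟨G, rfl⟩ := hS
  refine ⟨G.biUnion fun g => (ψ g).support, fun x hx => ?_⟩
  have hspan : Submodule.span R (G : Set M) ≤
      (Finsupp.supported N R (G.biUnion fun g => (ψ g).support : Set Λ)).comap ψ := by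
    refine Submodule.span_le.mpr fun g hg => ?_
    simp only [SetLike.mem_coe, Submodule.mem_comap, Finsupp.mem_supported, Finset.coe_subset]
    exact Finset.subset_biUnion_of_mem (fun g => (ψ g).support) hg
  exact Finset.coe_subset.mp ((Finsupp.mem_supported R _).mp (hspan hx))

section Monomial

variable {P : Type} [AddCommGroup P] [Lattice P] [CovariantClass P P (· + ·) (· ≤ ·)]
  {R : Type} [CommRing R]

lemma tp_of_nonneg {p : P} (hp : 0 ≤ p) : tp P R p = AddMonoidAlgebra.single ⟨p, hp⟩ 1 :=
  dif_pos hp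

lemma tp_of_not_nonneg {p : P} (hp : ¬ 0 ≤ p) : tp P R p = 0 :=
  dif_neg hp

lemma tp_add {p q : P} (hp : 0 ≤ p) (hq : 0 ≤ q) : tp P R (p + q) = tp P R p * tp P R q := by
  rw [tp_of_nonneg hp, tp_of_nonneg hq, tp_of_nonneg (add_nonneg hp hq),
    AddMonoidAlgebra.single_mul_single, one_mul]
  rfl

lemma single_eq_smul_tp (u : AddSubmonoid.nonneg P) (r : R) :
    AddMonoidAlgebra.single u r = r • tp P R u := by
  rw [tp_of_nonneg u.2, AddMonoidAlgebra.smul_single', mul_one]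

end Monomial

section PersMod

variable {P : Type} [AddCommGroup P] [Lattice P] [CovariantClass P P (· + ·) (· ≤ ·)]
  [DecidableEq P] {R : Type} [CommRing R] {F : PersMod P R}

section GradedFree

variable {Λ : Type} {d : Λ → P} {b : Module.Basis Λ (PersAlg P R) F.carrier}

variable (d b) in
noncomputable def monomialSpan (a : P) : Submodule R F.carrier :=
  Submodule.span R {x | ∃ η, ∃ u : AddSubmonoid.nonneg P, d η + u = a ∧ tp P R u • b η = x}

lemma monomialSpan_le_deg (hb : ∀ η, b η ∈ F.deg (d η)) (a : P) :
    monomialSpan d b a ≤ F.deg a := by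
  refine Submodule.span_le.mpr ?_
  rintro _ ⟨η, u, rfl, rfl⟩
  exact F.tp_smul_mem _ u.2 _ _ (hb η)

lemma iSup_monomialSpan_eq_top : ⨆ a, monomialSpan d b a = ⊤ := by
  refine eq_top_iff.mpr fun x _ => ?_
  rw [← b.linearCombination_repr x, Finsupp.linearCombination_apply]
  refine Submodule.finsuppSum_mem _ _ _ _ fun η _ => ?_
  induction b.repr x η using AddMonoidAlgebra.induction_linear with
  | zero => simp
  | add f g hf hg => simpa only [add_smul] using Submodule.add_mem _ hf hg
  | single u r =>
    rw [single_eq_smul_tp, smul_assoc]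
    exact Submodule.smul_mem _ r <| Submodule.mem_iSup_of_mem (d η + u) <|
      Submodule.subset_span ⟨η, u, rfl, rfl⟩

lemma monomialSpan_eq_deg (hb : ∀ η, b η ∈ F.deg (d η)) : monomialSpan d b = F.deg :=
  (F.isInternal.submodule_iSupIndep.le_iff_eq_of_iSup_eq_top iSup_monomialSpan_eq_top).mp
    (monomialSpan_le_deg hb)

lemma add_eq_of_coeff_repr_ne_zero_of_mem_monomialSpan {a : P} {x : F.carrier}
    (hx : x ∈ monomialSpan d b a) {η : Λ} {u : AddSubmonoid.nonneg P}
    (hu : (b.repr x η).coeff u ≠ 0) : d η + u = a := by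
  induction hx using Submodule.span_induction generalizing η with
  | mem x hx =>
    obtain ⟨η', u', rfl, rfl⟩ := hx
    classical
    rw [map_smul, b.repr_self, Finsupp.smul_single, smul_eq_mul, mul_one, Finsupp.single_apply,
      tp_of_nonneg u'.2] at hu
    split_ifs at hu with hη
    · subst hη
      rw [AddMonoidAlgebra.coeff_single, Finsupp.single_apply] at hu
      split_ifs at hu with hu'
      · rw [← hu']
      · exact absurd rfl hu
    · exact absurd rfl hu
  | zero => simp at hu
  | add x y _ _ hx hy =>
    rw [map_add, Finsupp.add_apply, AddMonoidAlgebra.coeff_add, Finsupp.add_apply] at hu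
    by_cases hxu : (b.repr x η).coeff u = 0
    · exact hy (by simpa [hxu] using hu)
    · exact hx hxu
  | smul r x _ hx =>
    refine hx fun h => hu ?_
    rw [LinearMapClass.map_smul_of_tower, Finsupp.smul_apply, AddMonoidAlgebra.coeff_smul,
      Finsupp.smul_apply, h, smul_zero]

/-- For `d η ≰ i` both sides vanish, `tp` being `0` off `U₀`. -/
lemma repr_eq_smul_tp (hb : ∀ η, b η ∈ F.deg (d η)) {i : P} {x : F.carrier} (hx : x ∈ F.deg i)
    (η : Λ) : ∃ c : R, b.repr x η = c • tp P R (i - d η) := by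
  rw [← monomialSpan_eq_deg hb] at hx
  have hsupp : ∀ u : AddSubmonoid.nonneg P, (b.repr x η).coeff u ≠ 0 → (u : P) = i - d η :=
    fun u hu => eq_sub_of_add_eq' (add_eq_of_coeff_repr_ne_zero_of_mem_monomialSpan hx hu)
  by_cases hi : 0 ≤ i - d η
  · refine ⟨(b.repr x η).coeff ⟨i - d η, hi⟩, ?_⟩
    rw [tp_of_nonneg hi, AddMonoidAlgebra.smul_single', mul_one]
    ext u
    by_cases hu : (u : P) = i - d η
    · obtain rfl : u = ⟨i - d η, hi⟩ := Subtype.ext hu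
      simp
    · rw [AddMonoidAlgebra.coeff_single, Finsupp.single_eq_of_ne (fun h => hu (by rw [h])),
        not_ne_iff.mp (mt (hsupp u) hu)]
  · refine ⟨0, ?_⟩
    ext u
    simp only [zero_smul, AddMonoidAlgebra.coeff_zero, Finsupp.coe_zero, Pi.zero_apply]
    exact not_ne_iff.mp fun hu => hi (hsupp u hu ▸ u.2)

lemma le_of_mem_support_repr (hb : ∀ η, b η ∈ F.deg (d η)) {i : P} {x : F.carrier}
    (hx : x ∈ F.deg i) {η : Λ} (hη : η ∈ (b.repr x).support) : d η ≤ i := by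
  obtain ⟨c, hc⟩ := repr_eq_smul_tp hb hx η
  by_contra hi
  rw [Finsupp.mem_support_iff, hc, tp_of_not_nonneg (mt sub_nonneg.mp hi), smul_zero] at hη
  exact hη rfl

lemma exists_tp_smul_eq_iff (hb : ∀ η, b η ∈ F.deg (d η)) {i ℓ : P} (hℓ : ℓ ≤ i) {x : F.carrier}
    (hx : x ∈ F.deg i) :
    (∃ y ∈ F.deg ℓ, tp P R (i - ℓ) • y = x) ↔ ∀ η ∈ (b.repr x).support, d η ≤ ℓ := by
  constructor
  · rintro ⟨y, hy, rfl⟩ η hη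
    refine le_of_mem_support_repr hb hy (Finsupp.mem_support_iff.mpr fun h => ?_)
    rw [Finsupp.mem_support_iff, map_smul, Finsupp.smul_apply, h, smul_zero] at hη
    exact hη rfl
  · intro hle
    choose c hc using repr_eq_smul_tp hb hx
    refine ⟨∑ η ∈ (b.repr x).support, c η • tp P R (ℓ - d η) • b η, ?_, ?_⟩
    · refine Submodule.sum_mem _ fun η hη => Submodule.smul_mem _ _ ?_
      simpa using F.tp_smul_mem _ (sub_nonneg.mpr (hle η hη)) _ _ (hb η)
    · have hterm : ∀ η ∈ (b.repr x).support,
          tp P R (i - ℓ) • c η • tp P R (ℓ - d η) • b η = b.repr x η • b η := by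
        intro η hη
        rw [hc, smul_comm, smul_smul, ← tp_add (sub_nonneg.mpr hℓ) (sub_nonneg.mpr (hle η hη)),
          sub_add_sub_cancel, smul_assoc]
      rw [Finset.smul_sum, Finset.sum_congr rfl hterm]
      exact b.linearCombination_repr x

end GradedFree

lemma exists_smul_eq_iff_of_retract {M : PersMod P R} {ι : M.carrier →ₗ[PersAlg P R] F.carrier}
    {π : F.carrier →ₗ[PersAlg P R] M.carrier} (hι : ∀ a, ∀ x ∈ M.deg a, ι x ∈ F.deg a)
    (hπ : ∀ a, ∀ x ∈ F.deg a, π x ∈ M.deg a) (hπι : π.comp ι = LinearMap.id)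
    (f : PersAlg P R) (ℓ : P) (x : M.carrier) :
    (∃ y ∈ M.deg ℓ, f • y = x) ↔ ∃ y ∈ F.deg ℓ, f • y = ι x := by
  constructor
  · rintro ⟨y, hy, rfl⟩
    exact ⟨ι y, hι ℓ y hy, (map_smul ι f y).symm⟩
  · rintro ⟨y, hy, hyx⟩
    refine ⟨π y, hπ ℓ y hy, ?_⟩
    rw [← map_smul, hyx, ← LinearMap.comp_apply, hπι, LinearMap.id_apply]

end PersMod

theorem exists_minimal_birth
    (M : PersMod P R) (hproj : IsGradedProjective P R M) (hFG : ∀ a : P, (M.deg a).FG)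
    (i : P) (hi : M.deg i ≠ ⊥) :
    ∃ μ ∈ {ℓ : P | ℓ ≤ i ∧ ∃ x ∈ M.deg i, x ≠ 0 ∧ ∃ y ∈ M.deg ℓ, tp P R (i - ℓ) • y = x},
      ∀ s ∈ {ℓ : P | ℓ ≤ i ∧ ∃ x ∈ M.deg i, x ≠ 0 ∧ ∃ y ∈ M.deg ℓ, tp P R (i - ℓ) • y = x},
        ¬ s < μ := by
  obtain ⟨F, ⟨Λ, d, b, hb⟩, ι, π, hι, hπ, hπι⟩ := hproj
  set supp : M.carrier → Finset Λ := fun x => (b.repr (ι x)).support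
  have supp_nonempty {x : M.carrier} (hx : x ≠ 0) : (supp x).Nonempty := by
    refine Finsupp.support_nonempty_iff.mpr fun h => hx ?_
    rw [← LinearMap.id_apply (R := PersAlg P R) x, ← hπι, LinearMap.comp_apply,
      b.repr.map_eq_zero_iff.mp h, map_zero]
  have born_iff {ℓ : P} (hℓ : ℓ ≤ i) {x : M.carrier} (hx : x ∈ M.deg i) :
      (∃ y ∈ M.deg ℓ, tp P R (i - ℓ) • y = x) ↔ ∀ η ∈ supp x, d η ≤ ℓ :=
    (exists_smul_eq_iff_of_retract hι hπ hπι _ ℓ x).trans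
      (exists_tp_smul_eq_iff hb hℓ (hι i x hx))
  obtain ⟨Ξ, hΞ⟩ := (hFG i).exists_support_subset ((b.repr.toLinearMap ∘ₗ ι).restrictScalars R)
  refine Set.Finite.exists_minimal_of_coinitial
    (T := {μ | ∃ x ∈ M.deg i, ∃ h : (supp x).Nonempty, (supp x).sup' h d = μ}) ?_ ?_ ?_ ?_
  · refine (Ξ.finite_setOf_sup'_of_subset d).subset ?_
    rintro _ ⟨x, hx, h, rfl⟩
    exact ⟨supp x, hΞ x hx, h, rfl⟩
  · obtain ⟨x, hx, hx0⟩ := (Submodule.ne_bot_iff _).mp hi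
    exact ⟨_, x, hx, supp_nonempty hx0, rfl⟩
  · rintro _ ⟨x, hx, h, rfl⟩
    have hμi : (supp x).sup' h d ≤ i :=
      Finset.sup'_le _ _ fun η hη => le_of_mem_support_repr hb (hι i x hx) hη
    refine ⟨hμi, x, hx, ?_, (born_iff hμi hx).mpr fun η hη => Finset.le_sup' d hη⟩
    rintro rfl
    simp [supp] at h
  · rintro ℓ ⟨hℓ, x, hx, hx0, hborn⟩
    exact ⟨_, ⟨x, hx, supp_nonempty hx0, rfl⟩, Finset.sup'_le _ _ ((born_iff hℓ hx).mp hborn)⟩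
end

section
/- Under the standing hypotheses, let i ∈ P satisfy M_i ≠ 0, set S = ⋃_{0 ≠ x ∈ M_i} S_x^M, and let μ be a minimal element of S. Then for every s ∈ P with s < μ one has M_s = 0. -/
open scoped DirectSum

variable (P : Type) [AddCommGroup P] [Lattice P]
  [CovariantClass P P (· + ·) (· ≤ ·)] [DecidableEq P]
variable (R : Type) [CommRing R]

/-! If `z ∈ M_s` with `s < μ`, then `t^{i-s} z ∈ M_i` would have `s` in its birth set, so the
minimality of `μ` forces `t^{i-s} z = 0`. Since `U₀` is cancellative, `t^{i-s}` is a regular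
element of `R[U₀]`, and a projective module is flat, so `t^{i-s}` acts injectively on `M`. -/

theorem AddMonoidAlgebra.isLeftRegular_single_one {R A : Type*} [Semiring R] [AddMonoid A]
    [IsCancelAdd A] (a : A) : IsLeftRegular (single a 1 : AddMonoidAlgebra R A) := fun x y h => by
  ext b
  simpa using congrArg (fun f => f.coeff (a + b)) h

variable {P R}

theorem isRegular_tp {Γ : Type} [AddCommGroup Γ] [Lattice Γ] [CovariantClass Γ Γ (· + ·) (· ≤ ·)]
    {p : Γ} (hp : 0 ≤ p) : IsRegular (tp Γ R p) := by
  rw [tp, dif_pos hp, ← isLeftRegular_iff_isRegular]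
  exact AddMonoidAlgebra.isLeftRegular_single_one _

theorem PersMod.tp_sub_smul_mem (M : PersMod P R) {a b : P} (hab : a ≤ b) {x : M.carrier}
    (hx : x ∈ M.deg a) : tp P R (b - a) • x ∈ M.deg b := by
  simpa using M.tp_smul_mem (b - a) (sub_nonneg.mpr hab) a x hx

theorem IsGradedProjective.projective {M : PersMod P R} (hM : IsGradedProjective P R M) :
    Module.Projective (PersAlg P R) M.carrier := by
  obtain ⟨F, ⟨_, _, b, -⟩, ι, π, -, -, hπι⟩ := hM
  have := Module.Free.of_basis b
  exact .of_split ι π hπι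

theorem IsGradedProjective.isSMulRegular_tp {M : PersMod P R} (hM : IsGradedProjective P R M)
    {p : P} (hp : 0 ≤ p) : IsSMulRegular M.carrier (tp P R p) :=
  have := hM.projective
  Module.Flat.isSMulRegular_of_isRegular (isRegular_tp hp)

theorem deg_eq_bot_of_lt_minimal_general
    (M : PersMod P R) (hproj : IsGradedProjective P R M)
    (i : P) (μ : P)
    (hμS : μ ∈ {ℓ : P | ℓ ≤ i ∧ ∃ x ∈ M.deg i, x ≠ 0 ∧ ∃ y ∈ M.deg ℓ, tp P R (i - ℓ) • y = x})
    (hmin : ∀ s ∈ {ℓ : P | ℓ ≤ i ∧ ∃ x ∈ M.deg i, x ≠ 0 ∧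
      ∃ y ∈ M.deg ℓ, tp P R (i - ℓ) • y = x}, ¬ s < μ) :
    ∀ s : P, s < μ → M.deg s = ⊥ := by
  intro s hs
  have hsi : s ≤ i := hs.le.trans hμS.1
  refine (Submodule.eq_bot_iff _).mpr fun z hz => ?_
  have hzero : tp P R (i - s) • z = 0 := by
    by_contra hne
    exact hmin s ⟨hsi, _, M.tp_sub_smul_mem hsi hz, hne, z, hz, rfl⟩ hs
  exact (hproj.isSMulRegular_tp (sub_nonneg.mpr hsi)).right_eq_zero_of_smul hzero

theorem deg_eq_bot_of_lt_minimal [IsDomain R] [IsPrincipalIdealRing R]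
    (M : PersMod P R) (hproj : IsGradedProjective P R M) (hFG : ∀ a : P, (M.deg a).FG)
    (i : P) (hi : M.deg i ≠ ⊥) (μ : P)
    (hμS : μ ∈ {ℓ : P | ℓ ≤ i ∧ ∃ x ∈ M.deg i, x ≠ 0 ∧ ∃ y ∈ M.deg ℓ, tp P R (i - ℓ) • y = x})
    (hmin : ∀ s ∈ {ℓ : P | ℓ ≤ i ∧ ∃ x ∈ M.deg i, x ≠ 0 ∧
      ∃ y ∈ M.deg ℓ, tp P R (i - ℓ) • y = x}, ¬ s < μ) :
    ∀ s : P, s < μ → M.deg s = ⊥ :=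
  deg_eq_bot_of_lt_minimal_general M hproj i μ hμS hmin
end

section
/- Let P be a lattice with a compatible abelian group structure, let R be a principal ideal domain, and let O ⊆ P. Suppose there exists a ∈ O such that no element of V_a ∩ O is a minimal element of O, where V_a = {x ∈ P : x ≤ a}. Let M be a P-graded R[U₀]-module such that M_i is a nonzero finitely generated free R-module for every i ∈ O and M_i = 0 for every i ∉ O. Then M is not graded projective. -/
open scoped DirectSum

variable (P : Type) [AddCommGroup P] [Lattice P]
  [CovariantClass P P (· + ·) (· ≤ ·)] [DecidableEq P]
variable (R : Type) [CommRing R]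

/-!
Suppose `M` is a graded summand of a graded free module `F` with homogeneous basis `b`. As `M_a`
is finitely generated over `R`, the coordinates of its image in `F` involve only a finite set `J`
of basis vectors. Since `t^s` is a non-zero-divisor in `R[U₀]`, the same holds for every `M_q`
with `q ≤ a`: the coordinates of `x` and of `t^{a-q} x ∈ M_a` have the same support. Expanding a
nonzero `x ∈ M_q` through the projection `F → M` and comparing degrees yields a basis vector in `J`
of degree `≤ q` whose image in `M` is nonzero, so its degree lies in `O`. Hence the finitely many
degrees of `J` are coinitial in `O ∩ V_a`, which then has a minimal element, a contradiction.
-/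

theorem Set.exists_minimal_of_finite_coinitial {α : Type*} [Preorder α] {s t : Set α}
    (ht : t.Finite) (hs : s.Nonempty) (hcoinitial : ∀ y ∈ s, ∃ z ∈ s ∩ t, z ≤ y) :
    ∃ m, Minimal (· ∈ s) m := by
  obtain ⟨y, hy⟩ := hs
  obtain ⟨z, hz, -⟩ := hcoinitial y hy
  obtain ⟨m, hm⟩ := (ht.inter_of_right s).exists_minimal ⟨z, hz⟩
  refine ⟨m, hm.prop.1, fun y hy hym => ?_⟩
  obtain ⟨z, hz, hzy⟩ := hcoinitial y hy
  exact hm.le_of_le hz (hzy.trans hym) |>.trans hzy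

theorem Finsupp.support_subset_biUnion_of_mem_span {S M N Λ : Type*} [Semiring S]
    [AddCommMonoid M] [Module S M] [AddCommMonoid N] [Module S N] [DecidableEq Λ]
    (f : M →ₗ[S] Λ →₀ N) {T : Finset M} {z : M} (hz : z ∈ Submodule.span S (T : Set M)) :
    (f z).support ⊆ T.biUnion fun t => (f t).support := by
  obtain ⟨c, -, rfl⟩ := Submodule.mem_span_finset.mp hz
  rw [map_sum]
  refine Finsupp.support_finsetSum.trans (Finset.biUnion_mono fun t _ => ?_)
  rw [map_smul]
  exact Finsupp.support_smul

section

variable {G : Type} [AddCommGroup G] [Lattice G] [CovariantClass G G (· + ·) (· ≤ ·)] {R}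

lemma tp_coe (u : AddSubmonoid.nonneg G) : tp G R u = AddMonoidAlgebra.single u 1 :=
  dif_pos u.2

lemma tp_mul_eq_zero_iff {s : G} (hs : 0 ≤ s) {c : PersAlg G R} : tp G R s * c = 0 ↔ c = 0 := by
  classical
  refine ⟨fun h => ?_, fun h => by rw [h, mul_zero]⟩
  have hsupp := congrArg (fun f => f.coeff.support) h
  simp only [tp_coe (⟨s, hs⟩ : AddSubmonoid.nonneg G)] at hsupp
  rw [AddMonoidAlgebra.support_coeff_single_mul_eq_image c (by simp)
    (IsAddLeftRegular.all _)] at hsupp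
  simpa using hsupp

lemma support_tp_smul {Λ : Type*} {s : G} (hs : 0 ≤ s) (v : Λ →₀ PersAlg G R) :
    (tp G R s • v).support = v.support := by
  ext η
  simp only [Finsupp.mem_support_iff, Finsupp.smul_apply, smul_eq_mul, ne_eq, tp_mul_eq_zero_iff hs]

end

namespace PersMod

variable {P R}

lemma support_subset_of_mem_deg (M : PersMod P R) {Λ : Type*} [DecidableEq Λ]
    (f : M.carrier →ₗ[PersAlg P R] Λ →₀ PersAlg P R) {a : P} {T : Finset M.carrier}
    (hT : M.deg a ≤ Submodule.span R (T : Set M.carrier)) {q : P} (hq : q ≤ a)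
    {x : M.carrier} (hx : x ∈ M.deg q) :
    (f x).support ⊆ T.biUnion fun t => (f t).support := by
  have hs : 0 ≤ a - q := sub_nonneg.mpr hq
  have hshift : tp P R (a - q) • x ∈ M.deg a := by
    simpa using M.tp_smul_mem _ hs q x hx
  calc (f x).support = (f (tp P R (a - q) • x)).support := by
        rw [map_smul, support_tp_smul hs]
    _ ⊆ _ := Finsupp.support_subset_biUnion_of_mem_span (f.restrictScalars R) (hT hshift)

lemma smul_mem_iSup_deg_ge (M : PersMod P R) {p : P} {y : M.carrier} (hy : y ∈ M.deg p)
    (c : PersAlg P R) : c • y ∈ ⨆ (j) (_ : p ≤ j), M.deg j := by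
  rw [← AddMonoidAlgebra.sum_coeff_single c, Finsupp.sum, Finset.sum_smul]
  refine Submodule.sum_mem _ fun u _ => ?_
  have hmem : c.coeff u • tp P R u • y ∈ M.deg (p + u) :=
    Submodule.smul_mem _ _ (M.tp_smul_mem u u.2 p y hy)
  rw [tp_coe, ← smul_assoc, AddMonoidAlgebra.smul_single', mul_one] at hmem
  exact Submodule.mem_iSup_of_mem (p + u)
    (Submodule.mem_iSup_of_mem (le_add_of_nonneg_right u.2) hmem)

lemma exists_mem_support_repr_le {M F : PersMod P R} {Λ : Type*} {d : Λ → P}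
    (b : Module.Basis Λ (PersAlg P R) F.carrier) (hb : ∀ η, b η ∈ F.deg (d η))
    (π : F.carrier →ₗ[PersAlg P R] M.carrier) (hπ : ∀ p, ∀ x ∈ F.deg p, π x ∈ M.deg p)
    {v : F.carrier} {q : P} (hv : π v ∈ M.deg q) (hv0 : π v ≠ 0) :
    ∃ η ∈ (b.repr v).support, d η ≤ q ∧ π (b η) ≠ 0 := by
  by_contra! hnone
  -- otherwise each term `c_η • π (b η)` of `π v` lives in degrees `≥ d η`, all different from `q`
  refine hv0 (Submodule.disjoint_def.mp (M.isInternal.submodule_iSupIndep q) _ hv ?_)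
  rw [← b.linearCombination_repr v, Finsupp.linearCombination_apply, map_finsuppSum]
  refine Submodule.finsuppSum_mem _ _ _ _ fun η hη => ?_
  rw [map_smul]
  by_cases hπη : π (b η) = 0
  · simp [hπη]
  have hge_ne : ∀ j, d η ≤ j → j ≠ q := fun j hj hjq =>
    hπη (hnone η (Finsupp.mem_support_iff.mpr hη) (hjq ▸ hj))
  exact biSup_mono (f := M.deg) hge_ne (M.smul_mem_iSup_deg_ge (hπ _ _ (hb η)) _)

end PersMod

theorem not_graded_projective
    (O : Set P) (a : P) (ha : a ∈ O)
    (hnomin : ∀ x ∈ O, x ≤ a → ∃ y ∈ O, y < x)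
    (M : PersMod P R)
    (hO : ∀ i ∈ O, M.deg i ≠ ⊥ ∧ (M.deg i).FG ∧ Module.Free R ↥(M.deg i))
    (hnotO : ∀ i, i ∉ O → M.deg i = ⊥) :
    ¬ IsGradedProjective P R M := by
  rintro ⟨F, ⟨Λ, d, b, hb⟩, ι, π, -, hπ, hπι⟩
  classical
  obtain ⟨T, hT⟩ := (hO a ha).2.1
  let J := T.biUnion fun t => (b.repr (ι t)).support
  let Oa : Set P := {x | x ∈ O ∧ x ≤ a}
  have hcoinitial : ∀ y ∈ Oa, ∃ z ∈ Oa ∩ d '' J, z ≤ y := by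
    rintro y ⟨hyO, hya⟩
    obtain ⟨x, hx, hx0⟩ := (Submodule.ne_bot_iff _).mp (hO y hyO).1
    have hπιx : π (ι x) = x := LinearMap.congr_fun hπι x
    obtain ⟨η, hηx, hηy, hπη⟩ :=
      PersMod.exists_mem_support_repr_le b hb π hπ (hπιx.symm ▸ hx) (hπιx.symm ▸ hx0)
    have hηO : d η ∈ O := by
      by_contra h
      exact hπη <| (Submodule.mem_bot R).mp (hnotO _ h ▸ hπ _ _ (hb η))
    refine ⟨d η, ⟨⟨hηO, hηy.trans hya⟩, η, ?_, rfl⟩, hηy⟩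
    exact M.support_subset_of_mem_deg (b.repr.toLinearMap ∘ₗ ι) hT.ge hya hx hηx
  obtain ⟨m, hm⟩ := Set.exists_minimal_of_finite_coinitial (s := Oa)
    (J.finite_toSet.image d) ⟨a, ha, le_rfl⟩ hcoinitial
  obtain ⟨y, hyO, hym⟩ := hnomin m hm.prop.1 hm.prop.2
  exact hm.not_lt ⟨hyO, hym.le.trans hm.prop.2⟩ hym
end
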